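/- arXiv:2511.20568 — 2 statements merged into one kernel-verified Lean document; each statement's English description precedes it below -/
import Mathlib

section
/- Let (M,g,H) be a Riemannian manifold with a 3-form H that is closed (dH = 0). Let ∇̂ and ∇̆ be the metric connections with torsion +H and -H respectively, with curvatures R̂ and R̆. Then R̂_{ijkm} = R̆_{kmij} for all indices. -/
open scoped BigOperators

noncomputable section

variable {n : ℕ}

/-- Coordinate partial derivative of a function on `ℝⁿ` in the `i`-th coordinate direction. -/
def pd (i : Fin n) (f : EuclideanSpace ℝ (Fin n) → ℝ) (x : EuclideanSpace ℝ (Fin n)) : ℝ :=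
  fderiv ℝ f x (EuclideanSpace.single i 1)

/-- Lowered Christoffel symbols `Γ_{kij}` of the Levi-Civita connection of the metric `g`. -/
def christoffelLow (g : EuclideanSpace ℝ (Fin n) → Fin n → Fin n → ℝ) (k i j : Fin n)
    (x : EuclideanSpace ℝ (Fin n)) : ℝ :=
  (1 / 2) * (pd i (fun y => g y j k) x + pd j (fun y => g y i k) x - pd k (fun y => g y i j) x)

/-- Christoffel symbols `Γ^k_{ij}` of the Levi-Civita connection `∇` of `g`. -/
def christoffel (g ginv : EuclideanSpace ℝ (Fin n) → Fin n → Fin n → ℝ) (k i j : Fin n)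
    (x : EuclideanSpace ℝ (Fin n)) : ℝ :=
  ∑ l, ginv x k l * christoffelLow g l i j x

/-- Connection coefficients `Γ̂^k_{ij} = Γ^k_{ij} + ½ H^k_{ij}` of the metric connection `∇̂`
with torsion the totally skew 3-form `H` (indices raised with `g`). -/
def christoffelHat (g ginv : EuclideanSpace ℝ (Fin n) → Fin n → Fin n → ℝ)
    (H : EuclideanSpace ℝ (Fin n) → Fin n → Fin n → Fin n → ℝ) (k i j : Fin n)
    (x : EuclideanSpace ℝ (Fin n)) : ℝ :=
  christoffel g ginv k i j x + (1 / 2) * ∑ l, ginv x k l * H x l i j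

/-- Curvature `R̂_{ij}{}^k{}_m` of `∇̂`, with the convention
`(∇̂_i∇̂_j - ∇̂_j∇̂_i) X^k = R̂_{ij}{}^k{}_m X^m` (modulo the torsion term). -/
def curvHatUp (g ginv : EuclideanSpace ℝ (Fin n) → Fin n → Fin n → ℝ)
    (H : EuclideanSpace ℝ (Fin n) → Fin n → Fin n → Fin n → ℝ) (i j k m : Fin n)
    (x : EuclideanSpace ℝ (Fin n)) : ℝ :=
  pd i (christoffelHat g ginv H k j m) x - pd j (christoffelHat g ginv H k i m) x
    + ∑ p, (christoffelHat g ginv H k i p x * christoffelHat g ginv H p j m x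
        - christoffelHat g ginv H k j p x * christoffelHat g ginv H p i m x)

/-- Fully lowered curvature tensor `R̂_{ijkm} = g_{kp} R̂_{ij}{}^p{}_m` of `∇̂`. -/
def curvHat (g ginv : EuclideanSpace ℝ (Fin n) → Fin n → Fin n → ℝ)
    (H : EuclideanSpace ℝ (Fin n) → Fin n → Fin n → Fin n → ℝ) (i j k m : Fin n)
    (x : EuclideanSpace ℝ (Fin n)) : ℝ :=
  ∑ p, g x k p * curvHatUp g ginv H i j p m x

/-- Covariant derivative `∇̂_i H_{jkm}` of the 3-form `H` with respect to `∇̂`. -/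
def nablaHatH (g ginv : EuclideanSpace ℝ (Fin n) → Fin n → Fin n → ℝ)
    (H : EuclideanSpace ℝ (Fin n) → Fin n → Fin n → Fin n → ℝ) (i j k m : Fin n)
    (x : EuclideanSpace ℝ (Fin n)) : ℝ :=
  pd i (fun y => H y j k m) x
    - ∑ p, (christoffelHat g ginv H p i j x * H x p k m
        + christoffelHat g ginv H p i k x * H x j p m
        + christoffelHat g ginv H p i m x * H x j k p)

/-- Covariant derivative `∇_i H_{jkm}` of the 3-form `H` with respect to the
Levi-Civita connection `∇` of `g`. -/
def nablaLCH (g ginv : EuclideanSpace ℝ (Fin n) → Fin n → Fin n → ℝ)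
    (H : EuclideanSpace ℝ (Fin n) → Fin n → Fin n → Fin n → ℝ) (i j k m : Fin n)
    (x : EuclideanSpace ℝ (Fin n)) : ℝ :=
  pd i (fun y => H y j k m) x
    - ∑ p, (christoffel g ginv p i j x * H x p k m
        + christoffel g ginv p i k x * H x j p m
        + christoffel g ginv p i m x * H x j k p)

/-- Components `(dH)_{ijkm}` of the exterior derivative of the 3-form `H`. -/
def extDerH (H : EuclideanSpace ℝ (Fin n) → Fin n → Fin n → Fin n → ℝ) (i j k m : Fin n)
    (x : EuclideanSpace ℝ (Fin n)) : ℝ :=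
  pd i (fun y => H y j k m) x - pd j (fun y => H y i k m) x
    + pd k (fun y => H y i j m) x - pd m (fun y => H y i j k) x

/-- `g` is a smooth Riemannian metric (in the fixed global chart) with inverse `ginv`. -/
def IsRiemannianData (g ginv : EuclideanSpace ℝ (Fin n) → Fin n → Fin n → ℝ) : Prop :=
  (∀ x i j, g x i j = g x j i) ∧
  (∀ (x : EuclideanSpace ℝ (Fin n)) (v : Fin n → ℝ), v ≠ 0 →
    0 < ∑ i, ∑ j, g x i j * v i * v j) ∧
  (∀ x i j, (∑ k, g x i k * ginv x k j) = if i = j then (1 : ℝ) else 0) ∧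
  (∀ i j, ContDiff ℝ (⊤ : ℕ∞) fun x => g x i j) ∧
  (∀ i j, ContDiff ℝ (⊤ : ℕ∞) fun x => ginv x i j)

/-- `H` is a smooth (totally antisymmetric) 3-form. -/
def IsThreeForm (H : EuclideanSpace ℝ (Fin n) → Fin n → Fin n → Fin n → ℝ) : Prop :=
  (∀ x i j k, H x i j k = -H x j i k) ∧
  (∀ x i j k, H x i j k = -H x i k j) ∧
  (∀ i j k, ContDiff ℝ (⊤ : ℕ∞) fun x => H x i j k)

/-! In terms of the lowered coefficients `Ĉ_{kij} = Γ_{kij} + ½ H_{kij}` of `∇̂`, metric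
compatibility `∂_a g_{kq} = Ĉ_{kaq} + Ĉ_{qak}` turns the lowered curvature into
`R̂_{ijkm} = ∂_i Ĉ_{kjm} - ∂_j Ĉ_{kim} - Ĉ_{pik} g^{pq} Ĉ_{qjm} + Ĉ_{pjk} g^{pq} Ĉ_{qim}`.
Flipping the sign of `H` transposes the last two indices of `Ĉ`, which matches the quadratic
terms of `R̂_{ijkm}` and `R̆_{kmij}`. The derivative terms differ by the Levi-Civita part, which
vanishes by symmetry of second derivatives, and by `-½ (dH)_{ijkm} = 0`. -/

section PartialDerivative

variable {f h : EuclideanSpace ℝ (Fin n) → ℝ} {x : EuclideanSpace ℝ (Fin n)}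

lemma differentiableAt_of_contDiff_top (hf : ContDiff ℝ (⊤ : ℕ∞) f) :
    DifferentiableAt ℝ f x :=
  hf.differentiable (by simp) x

lemma pd_add (i : Fin n) (hf : DifferentiableAt ℝ f x) (hh : DifferentiableAt ℝ h x) :
    pd i (fun y => f y + h y) x = pd i f x + pd i h x := by
  simp [pd, fderiv_fun_add hf hh]

lemma pd_sub (i : Fin n) (hf : DifferentiableAt ℝ f x) (hh : DifferentiableAt ℝ h x) :
    pd i (fun y => f y - h y) x = pd i f x - pd i h x := by
  simp [pd, fderiv_fun_sub hf hh]

lemma pd_neg (i : Fin n) : pd i (fun y => -f y) x = -pd i f x := by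
  simp [pd, fderiv_fun_neg]

lemma pd_const_mul (i : Fin n) (hf : DifferentiableAt ℝ f x) (c : ℝ) :
    pd i (fun y => c * f y) x = c * pd i f x := by
  simp [pd, fderiv_const_mul hf c]

lemma pd_mul (i : Fin n) (hf : DifferentiableAt ℝ f x) (hh : DifferentiableAt ℝ h x) :
    pd i (fun y => f y * h y) x = f x * pd i h x + h x * pd i f x := by
  simp [pd, fderiv_fun_mul hf hh]

lemma pd_sum {ι : Type*} [Fintype ι] {F : ι → EuclideanSpace ℝ (Fin n) → ℝ} (i : Fin n)
    (hF : ∀ p, DifferentiableAt ℝ (F p) x) :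
    pd i (fun y => ∑ p, F p y) x = ∑ p, pd i (F p) x := by
  simp [pd, fderiv_fun_sum fun p _ => hF p]

lemma contDiff_pd (hf : ContDiff ℝ (⊤ : ℕ∞) f) (i : Fin n) :
    ContDiff ℝ (⊤ : ℕ∞) (pd i f) :=
  (hf.fderiv_right (by exact_mod_cast le_top)).clm_apply contDiff_const

lemma pd_pd_comm (hf : ContDiff ℝ (⊤ : ℕ∞) f) (a b : Fin n) :
    pd a (pd b f) x = pd b (pd a f) x := by
  have hsymm : IsSymmSndFDerivAt ℝ f x := hf.contDiffAt.isSymmSndFDerivAt <| by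
    rw [minSmoothness_of_isRCLikeNormedField]
    exact_mod_cast ENat.natCast_le_of_coe_top_le_withTop le_rfl 2
  have hdf : ContDiff ℝ (⊤ : ℕ∞) (fderiv ℝ f) := hf.fderiv_right (by exact_mod_cast le_top)
  have second : ∀ v w : EuclideanSpace ℝ (Fin n),
      fderiv ℝ (fun y => fderiv ℝ f y w) x v = fderiv ℝ (fderiv ℝ f) x v w := fun v w => by
    simp [fderiv_clm_apply (hdf.differentiable (by simp) x) (differentiableAt_const w)]
  change fderiv ℝ (fun y => fderiv ℝ f y _) x _ = fderiv ℝ (fun y => fderiv ℝ f y _) x _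
  rw [second, second, hsymm]

end PartialDerivative

lemma IsThreeForm.antisymm_13 {H : EuclideanSpace ℝ (Fin n) → Fin n → Fin n → Fin n → ℝ}
    (hH : IsThreeForm H) (x : EuclideanSpace ℝ (Fin n)) (a b c : Fin n) :
    H x a b c = -H x c b a := by
  rw [hH.1, hH.2.1, hH.1, neg_neg]

lemma IsThreeForm.neg {H : EuclideanSpace ℝ (Fin n) → Fin n → Fin n → Fin n → ℝ}
    (hH : IsThreeForm H) : IsThreeForm fun y a b c => -H y a b c :=
  ⟨fun x a b c => neg_inj.mpr (hH.1 x a b c), fun x a b c => neg_inj.mpr (hH.2.1 x a b c),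
    fun a b c => (hH.2.2 a b c).neg⟩

lemma inverse_metric_symm {g ginv : EuclideanSpace ℝ (Fin n) → Fin n → Fin n → ℝ}
    (hg_symm : ∀ x i j, g x i j = g x j i)
    (hg_inv : ∀ x i j, (∑ k, g x i k * ginv x k j) = if i = j then (1 : ℝ) else 0)
    (x : EuclideanSpace ℝ (Fin n)) (a b : Fin n) : ginv x a b = ginv x b a := by
  have hinv : (Matrix.of (g x))⁻¹ = Matrix.of (ginv x) :=
    Matrix.inv_eq_right_inv (Matrix.ext fun i j => hg_inv x i j)
  have hsymm : (Matrix.of (g x)).transpose = Matrix.of (g x) := Matrix.ext fun i j => hg_symm x j i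
  have htranspose := Matrix.transpose_nonsing_inv (Matrix.of (g x))
  rw [hsymm, hinv] at htranspose
  exact congrFun (congrFun htranspose b) a

section Christoffel

variable {g ginv : EuclideanSpace ℝ (Fin n) → Fin n → Fin n → ℝ}
  {H : EuclideanSpace ℝ (Fin n) → Fin n → Fin n → Fin n → ℝ} {x : EuclideanSpace ℝ (Fin n)}

def christoffelHatLow (g : EuclideanSpace ℝ (Fin n) → Fin n → Fin n → ℝ)
    (H : EuclideanSpace ℝ (Fin n) → Fin n → Fin n → Fin n → ℝ) (k i j : Fin n)
    (x : EuclideanSpace ℝ (Fin n)) : ℝ :=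
  christoffelLow g k i j x + (1 / 2) * H x k i j

lemma christoffelLow_comm (hg_symm : ∀ x i j, g x i j = g x j i) (k a b : Fin n) :
    christoffelLow g k a b x = christoffelLow g k b a x := by
  simp only [christoffelLow, hg_symm _ a b]
  ring

lemma pd_metric_eq_christoffelLow (hg_symm : ∀ x i j, g x i j = g x j i) (i k p : Fin n) :
    pd i (fun y => g y k p) x = christoffelLow g p i k x + christoffelLow g k i p x := by
  simp only [christoffelLow, hg_symm _ p k]
  ring

lemma pd_metric_eq_christoffelHatLow (hg_symm : ∀ x i j, g x i j = g x j i)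
    (hH : ∀ x a b c, H x a b c = -H x c b a) (a k q : Fin n) :
    pd a (fun y => g y k q) x = christoffelHatLow g H k a q x + christoffelHatLow g H q a k x := by
  rw [pd_metric_eq_christoffelLow hg_symm, christoffelHatLow, christoffelHatLow, hH x q a k]
  ring

lemma christoffelHatLow_neg (hg_symm : ∀ x i j, g x i j = g x j i)
    (hH : ∀ x i j k, H x i j k = -H x i k j) (p a b : Fin n) :
    christoffelHatLow g (fun y a b c => -H y a b c) p a b = christoffelHatLow g H p b a := by
  ext x
  rw [christoffelHatLow, christoffelHatLow, christoffelLow_comm hg_symm, hH x p b a]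

lemma christoffelHat_eq_sum (k i j : Fin n) :
    christoffelHat g ginv H k i j x = ∑ l, ginv x k l * christoffelHatLow g H l i j x := by
  simp only [christoffelHat, christoffel, christoffelHatLow, Finset.mul_sum,
    ← Finset.sum_add_distrib]
  exact Finset.sum_congr rfl fun l _ => by ring

lemma sum_metric_mul_christoffelHat
    (hg_inv : ∀ x i j, (∑ k, g x i k * ginv x k j) = if i = j then (1 : ℝ) else 0)
    (k i j : Fin n) :
    ∑ p, g x k p * christoffelHat g ginv H p i j x = christoffelHatLow g H k i j x := by
  simp only [christoffelHat_eq_sum, Finset.mul_sum, ← mul_assoc]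
  rw [Finset.sum_comm]
  simp [← Finset.sum_mul, hg_inv x k]

lemma contDiff_christoffelLow (hg_smooth : ∀ i j, ContDiff ℝ (⊤ : ℕ∞) fun x => g x i j)
    (k i j : Fin n) : ContDiff ℝ (⊤ : ℕ∞) (christoffelLow g k i j) :=
  contDiff_const.mul <| ((contDiff_pd (hg_smooth j k) i).add
    (contDiff_pd (hg_smooth i k) j)).sub (contDiff_pd (hg_smooth i j) k)

lemma contDiff_christoffelHatLow (hg_smooth : ∀ i j, ContDiff ℝ (⊤ : ℕ∞) fun x => g x i j)
    (hH_smooth : ∀ i j k, ContDiff ℝ (⊤ : ℕ∞) fun x => H x i j k) (k i j : Fin n) :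
    ContDiff ℝ (⊤ : ℕ∞) (christoffelHatLow g H k i j) :=
  (contDiff_christoffelLow hg_smooth k i j).add (contDiff_const.mul (hH_smooth k i j))

lemma contDiff_christoffelHat (hg_smooth : ∀ i j, ContDiff ℝ (⊤ : ℕ∞) fun x => g x i j)
    (hginv_smooth : ∀ i j, ContDiff ℝ (⊤ : ℕ∞) fun x => ginv x i j)
    (hH_smooth : ∀ i j k, ContDiff ℝ (⊤ : ℕ∞) fun x => H x i j k) (k i j : Fin n) :
    ContDiff ℝ (⊤ : ℕ∞) (christoffelHat g ginv H k i j) := by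
  rw [show christoffelHat g ginv H k i j = _ from funext fun x => christoffelHat_eq_sum k i j]
  exact ContDiff.sum fun l _ =>
    (hginv_smooth k l).mul (contDiff_christoffelHatLow hg_smooth hH_smooth l i j)

end Christoffel

section Curvature

variable {g ginv : EuclideanSpace ℝ (Fin n) → Fin n → Fin n → ℝ}
  {H : EuclideanSpace ℝ (Fin n) → Fin n → Fin n → Fin n → ℝ} {x : EuclideanSpace ℝ (Fin n)}

lemma sum_metric_mul_pd_christoffelHat
    (hg_inv : ∀ x i j, (∑ k, g x i k * ginv x k j) = if i = j then (1 : ℝ) else 0)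
    (hg_smooth : ∀ i j, ContDiff ℝ (⊤ : ℕ∞) fun x => g x i j)
    (hginv_smooth : ∀ i j, ContDiff ℝ (⊤ : ℕ∞) fun x => ginv x i j)
    (hH_smooth : ∀ i j k, ContDiff ℝ (⊤ : ℕ∞) fun x => H x i j k) (d k a b : Fin n) :
    ∑ p, g x k p * pd d (christoffelHat g ginv H p a b) x
      = pd d (christoffelHatLow g H k a b) x
        - ∑ p, christoffelHat g ginv H p a b x * pd d (fun y => g y k p) x := by
  have hg := fun p => differentiableAt_of_contDiff_top (x := x) (hg_smooth k p)
  have hΓ := fun p => differentiableAt_of_contDiff_top (x := x)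
    (contDiff_christoffelHat hg_smooth hginv_smooth hH_smooth p a b)
  have hlow : christoffelHatLow g H k a b
      = fun y => ∑ p, g y k p * christoffelHat g ginv H p a b y :=
    funext fun y => (sum_metric_mul_christoffelHat hg_inv k a b).symm
  rw [hlow, pd_sum d fun p => (hg p).fun_mul (hΓ p)]
  simp only [pd_mul d (hg _) (hΓ _), Finset.sum_add_distrib]
  ring

lemma sum_christoffelHat_mul_pd_metric
    (hg_symm : ∀ x i j, g x i j = g x j i) (hH : ∀ x a b c, H x a b c = -H x c b a)
    (a b k m : Fin n) :
    ∑ p, christoffelHat g ginv H p b m x * pd a (fun y => g y k p) x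
      = ∑ p, christoffelHatLow g H k a p x * christoffelHat g ginv H p b m x
        + ∑ p, ∑ q, christoffelHatLow g H p a k x
            * (ginv x p q * christoffelHatLow g H q b m x) := by
  simp only [pd_metric_eq_christoffelHatLow hg_symm hH, mul_add, Finset.sum_add_distrib]
  congr 1
  · exact Finset.sum_congr rfl fun p _ => mul_comm _ _
  · simp only [christoffelHat_eq_sum, Finset.sum_mul]
    exact Finset.sum_congr rfl fun p _ => Finset.sum_congr rfl fun q _ => by ring

lemma sum_metric_mul_sum_christoffelHat_mul
    (hg_inv : ∀ x i j, (∑ k, g x i k * ginv x k j) = if i = j then (1 : ℝ) else 0)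
    (k a b m : Fin n) :
    ∑ p, g x k p * ∑ q, christoffelHat g ginv H p a q x * christoffelHat g ginv H q b m x
      = ∑ q, christoffelHatLow g H k a q x * christoffelHat g ginv H q b m x := by
  simp only [Finset.mul_sum, ← mul_assoc]
  rw [Finset.sum_comm]
  simp only [← Finset.sum_mul, sum_metric_mul_christoffelHat hg_inv]

lemma curvHat_eq_christoffelHatLow (hg : IsRiemannianData g ginv) (hH : IsThreeForm H)
    (i j k m : Fin n) :
    curvHat g ginv H i j k m x
      = pd i (christoffelHatLow g H k j m) x - pd j (christoffelHatLow g H k i m) x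
        - ∑ p, ∑ q, christoffelHatLow g H p i k x
            * (ginv x p q * christoffelHatLow g H q j m x)
        + ∑ p, ∑ q, christoffelHatLow g H p j k x
            * (ginv x p q * christoffelHatLow g H q i m x) := by
  obtain ⟨hg_symm, -, hg_inv, hg_smooth, hginv_smooth⟩ := hg
  simp only [curvHat, curvHatUp, Finset.sum_sub_distrib, mul_add, mul_sub,
    Finset.sum_add_distrib]
  rw [sum_metric_mul_pd_christoffelHat hg_inv hg_smooth hginv_smooth hH.2.2,
    sum_metric_mul_pd_christoffelHat hg_inv hg_smooth hginv_smooth hH.2.2,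
    sum_metric_mul_sum_christoffelHat_mul hg_inv, sum_metric_mul_sum_christoffelHat_mul hg_inv,
    sum_christoffelHat_mul_pd_metric hg_symm hH.antisymm_13,
    sum_christoffelHat_mul_pd_metric hg_symm hH.antisymm_13]
  ring

end Curvature

section Derivatives

variable {g : EuclideanSpace ℝ (Fin n) → Fin n → Fin n → ℝ}
  {H : EuclideanSpace ℝ (Fin n) → Fin n → Fin n → Fin n → ℝ} {x : EuclideanSpace ℝ (Fin n)}

lemma pd_christoffelLow (hg_smooth : ∀ i j, ContDiff ℝ (⊤ : ℕ∞) fun x => g x i j)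
    (a c b d : Fin n) :
    pd a (christoffelLow g c b d) x
      = (1 / 2) * (pd a (pd b fun y => g y d c) x + pd a (pd d fun y => g y b c) x
        - pd a (pd c fun y => g y b d) x) := by
  have h1 := differentiableAt_of_contDiff_top (x := x) (contDiff_pd (hg_smooth d c) b)
  have h2 := differentiableAt_of_contDiff_top (x := x) (contDiff_pd (hg_smooth b c) d)
  have h3 := differentiableAt_of_contDiff_top (x := x) (contDiff_pd (hg_smooth b d) c)
  change pd a (fun y => christoffelLow g c b d y) x = _
  simp only [christoffelLow]
  rw [pd_const_mul a ((h1.fun_add h2).fun_sub h3),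
    pd_sub a (h1.fun_add h2) h3, pd_add a h1 h2]

lemma pd_christoffelLow_alternating (hg_symm : ∀ x i j, g x i j = g x j i)
    (hg_smooth : ∀ i j, ContDiff ℝ (⊤ : ℕ∞) fun x => g x i j) (i j k m : Fin n) :
    pd i (christoffelLow g k j m) x - pd j (christoffelLow g k i m) x
      - pd k (christoffelLow g i j m) x + pd m (christoffelLow g i j k) x = 0 := by
  have hswap : ∀ a b c d : Fin n,
      pd a (pd b fun y => g y c d) x = pd b (pd a fun y => g y d c) x := fun a b c d => by
    rw [pd_pd_comm (hg_smooth c d), funext fun y => hg_symm y c d]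
  simp only [pd_christoffelLow hg_smooth]
  linarith [pd_pd_comm (x := x) (hg_smooth m k) i j, pd_pd_comm (x := x) (hg_smooth j k) i m,
    pd_pd_comm (x := x) (hg_smooth j m) i k, pd_pd_comm (x := x) (hg_smooth j i) k m,
    hswap j m i k, hswap j k i m]

lemma pd_christoffelHatLow_alternating (hg_symm : ∀ x i j, g x i j = g x j i)
    (hg_smooth : ∀ i j, ContDiff ℝ (⊤ : ℕ∞) fun x => g x i j)
    (hH_skew : ∀ x i j k, H x i j k = -H x j i k)
    (hH_smooth : ∀ i j k, ContDiff ℝ (⊤ : ℕ∞) fun x => H x i j k) (i j k m : Fin n) :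
    pd i (christoffelHatLow g H k j m) x - pd j (christoffelHatLow g H k i m) x
      - pd k (christoffelHatLow g H i j m) x + pd m (christoffelHatLow g H i j k) x
      = -(1 / 2) * extDerH H i j k m x := by
  have hsplit : ∀ a c b d : Fin n, pd a (christoffelHatLow g H c b d) x
      = pd a (christoffelLow g c b d) x + (1 / 2) * pd a (fun y => H y c b d) x :=
    fun a c b d => by
      have hH := differentiableAt_of_contDiff_top (x := x) (hH_smooth c b d)
      change pd a (fun y => christoffelHatLow g H c b d y) x = _
      simp only [christoffelHatLow]
      rw [pd_add a (differentiableAt_of_contDiff_top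
        (contDiff_christoffelLow hg_smooth c b d)) (hH.const_mul _), pd_const_mul a hH]
  have hkj : (fun y => H y k j m) = fun y => -H y j k m := funext fun y => hH_skew y k j m
  have hki : (fun y => H y k i m) = fun y => -H y i k m := funext fun y => hH_skew y k i m
  simp only [hsplit, extDerH, hkj, hki, pd_neg]
  linarith [pd_christoffelLow_alternating (x := x) hg_symm hg_smooth i j k m]

end Derivatives

lemma sum_sum_mul_comm_of_symm {ι R : Type*} [Fintype ι] [CommSemiring R] {A : ι → ι → R}
    (hA : ∀ p q, A p q = A q p) (u v : ι → R) :
    ∑ p, ∑ q, u p * (A p q * v q) = ∑ p, ∑ q, v p * (A p q * u q) := by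
  rw [Finset.sum_comm]
  exact Finset.sum_congr rfl fun p _ => Finset.sum_congr rfl fun q _ => by rw [hA]; ring

/-- If the torsion 3-form `H` is closed, then the curvatures `R̂`, `R̆` of the
metric connections with torsion `+H` and `-H` satisfy the pair symmetry
`R̂_{ijkm} = R̆_{kmij}`. -/
theorem curv_pair_symmetry
    (g ginv : EuclideanSpace ℝ (Fin n) → Fin n → Fin n → ℝ)
    (H : EuclideanSpace ℝ (Fin n) → Fin n → Fin n → Fin n → ℝ)
    (hg : IsRiemannianData g ginv) (hH : IsThreeForm H)
    (hclosed : ∀ (x : EuclideanSpace ℝ (Fin n)) (i j k m : Fin n), extDerH H i j k m x = 0) :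
    ∀ (x : EuclideanSpace ℝ (Fin n)) (i j k m : Fin n),
      curvHat g ginv H i j k m x
        = curvHat g ginv (fun y a b c => -H y a b c) k m i j x := by
  intro x i j k m
  rw [curvHat_eq_christoffelHatLow hg hH, curvHat_eq_christoffelHatLow hg hH.neg]
  obtain ⟨hg_symm, -, hg_inv, hg_smooth, -⟩ := hg
  simp only [christoffelHatLow_neg hg_symm hH.2.1]
  have hderiv := pd_christoffelHatLow_alternating (x := x) hg_symm hg_smooth hH.1 hH.2.2 i j k m
  have hquad := sum_sum_mul_comm_of_symm (inverse_metric_symm hg_symm hg_inv x)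
    (fun p => christoffelHatLow g H p j k x) (fun q => christoffelHatLow g H q i m x)
  rw [hclosed, mul_zero] at hderiv
  linarith
end
end

section
/- Let (M,g,H) be a Riemannian manifold with H a 3-form that is closed (dH = 0) and covariantly constant with respect to the metric connection ∇̂ with torsion H (∇̂H = 0). Then H is covariantly constant with respect to the Levi-Civita connection: ∇H = 0. -/
/-! Since `Γ̂ = Γ + ½ H^·`, the two covariant derivatives of `H` differ by a quadratic term:
`∇̂_i H_{jkm} = ∇_i H_{jkm} - ½ Q_{ijkm}` with
`Q_{ijkm} = H^p_{ij} H_{pkm} + H^p_{ik} H_{jpm} + H^p_{im} H_{jkp}`, and `Q` is totally skew.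
So `∇̂H = 0` gives `∇H = ½ Q`. Because `∇` is torsion-free, the alternation of `∇H` is `dH = 0`,
while the alternation of `½ Q` is `2 Q`; hence `Q = 0` and `∇H = 0`. -/

open scoped BigOperators

noncomputable section

variable {n : ℕ}

/-- For connection coefficients `c`,
`∇_a T_{bde} = ∂_a T_{bde} - connCorrection c T a b d e`. -/
def connCorrection (c T : Fin n → Fin n → Fin n → ℝ) (a b d e : Fin n) : ℝ :=
  ∑ p, (c p a b * T p d e + c p a d * T b p e + c p a e * T b d p)

def raiseFirst (G : Fin n → Fin n → ℝ) (T : Fin n → Fin n → Fin n → ℝ) (p a b : Fin n) : ℝ :=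
  ∑ l, G p l * T l a b

def alt4 (D : Fin n → Fin n → Fin n → Fin n → ℝ) (i j k m : Fin n) : ℝ :=
  D i j k m - D j i k m + D k i j m - D m i j k

def IsSkew3 (T : Fin n → Fin n → Fin n → ℝ) : Prop :=
  (∀ a b d, T a b d = -T b a d) ∧ (∀ a b d, T a b d = -T a d b)

def IsSkew4 (Q : Fin n → Fin n → Fin n → Fin n → ℝ) : Prop :=
  (∀ a b d e, Q b a d e = -Q a b d e) ∧ (∀ a b d e, Q a d b e = -Q a b d e) ∧
    (∀ a b d e, Q a b e d = -Q a b d e)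

theorem IsSkew3.cycle {T : Fin n → Fin n → Fin n → ℝ} (hT : IsSkew3 T) (a b d : Fin n) :
    T a b d = T b d a := by
  rw [hT.1 a b d, hT.2 b a d, neg_neg]

theorem connCorrection_add_smul (c c' T : Fin n → Fin n → Fin n → ℝ) (r : ℝ) (a b d e : Fin n) :
    connCorrection (fun p a b => c p a b + r * c' p a b) T a b d e
      = connCorrection c T a b d e + r * connCorrection c' T a b d e := by
  simp only [connCorrection, Finset.mul_sum, ← Finset.sum_add_distrib]
  exact Finset.sum_congr rfl fun p _ => by ring

theorem alt4_connCorrection_eq_zero {c T : Fin n → Fin n → Fin n → ℝ}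
    (hc : ∀ p a b, c p a b = c p b a) (hT : IsSkew3 T) (a b d e : Fin n) :
    alt4 (connCorrection c T) a b d e = 0 := by
  simp only [alt4, connCorrection, ← Finset.sum_sub_distrib, ← Finset.sum_add_distrib]
  refine Finset.sum_eq_zero fun p _ => ?_
  rw [hc p b a, hc p d a, hc p d b, hc p e a, hc p e b, hc p e d]
  linear_combination c p a d * hT.1 b p e - c p b e * hT.2 a d p - c p a e * hT.cycle p b d

theorem connCorrection_swap23 (c : Fin n → Fin n → Fin n → ℝ) {T : Fin n → Fin n → Fin n → ℝ}
    (hT : IsSkew3 T) (a b d e : Fin n) :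
    connCorrection c T a d b e = -connCorrection c T a b d e := by
  simp only [connCorrection, ← Finset.sum_neg_distrib]
  refine Finset.sum_congr rfl fun p _ => ?_
  rw [hT.1 p b e, hT.1 d p e, hT.1 d b p]
  ring

theorem connCorrection_swap34 (c : Fin n → Fin n → Fin n → ℝ) {T : Fin n → Fin n → Fin n → ℝ}
    (hT : IsSkew3 T) (a b d e : Fin n) :
    connCorrection c T a b e d = -connCorrection c T a b d e := by
  simp only [connCorrection, ← Finset.sum_neg_distrib]
  refine Finset.sum_congr rfl fun p _ => ?_
  rw [hT.2 p e d, hT.2 b p d, hT.2 b e p]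
  ring

theorem sum_sum_mul_eq_zero_of_symm_of_antisymm {G F : Fin n → Fin n → ℝ}
    (hG : ∀ p l, G p l = G l p) (hF : ∀ p l, F p l = -F l p) :
    ∑ p, ∑ l, G p l * F p l = 0 := by
  have h : ∑ p, ∑ l, G p l * F p l = -∑ p, ∑ l, G p l * F p l := by
    calc ∑ p, ∑ l, G p l * F p l = ∑ l, ∑ p, G l p * -F l p := by
          rw [Finset.sum_comm]; simp only [hG, ← hF]
      _ = -∑ p, ∑ l, G p l * F p l := by simp
  linarith

theorem connCorrection_raiseFirst_swap12 {G : Fin n → Fin n → ℝ} (hG : ∀ p l, G p l = G l p)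
    {T : Fin n → Fin n → Fin n → ℝ} (hT : IsSkew3 T) (a b d e : Fin n) :
    connCorrection (raiseFirst G T) T b a d e = -connCorrection (raiseFirst G T) T a b d e := by
  rw [eq_neg_iff_add_eq_zero]
  calc connCorrection (raiseFirst G T) T b a d e + connCorrection (raiseFirst G T) T a b d e
      = ∑ p, ∑ l, G p l * (T l b d * T a p e + T l b e * T a d p
          + T l a d * T b p e + T l a e * T b d p) := by
        simp only [connCorrection, raiseFirst, Finset.sum_mul, ← Finset.sum_add_distrib]
        refine Finset.sum_congr rfl fun p _ => Finset.sum_congr rfl fun l _ => ?_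
        rw [hT.2 l b a]
        ring
    _ = 0 := by
        refine sum_sum_mul_eq_zero_of_symm_of_antisymm hG fun p l => ?_
        linear_combination T b d l * hT.1 p a e + T a p e * hT.cycle l b d
          + T a d p * hT.1 b l e + T b l e * hT.cycle p a d
          + T a d l * hT.1 p b e + T b p e * hT.cycle l a d
          + T b d p * hT.1 l a e + T a l e * hT.cycle p b d

theorem isSkew4_connCorrection_raiseFirst {G : Fin n → Fin n → ℝ} (hG : ∀ p l, G p l = G l p)
    {T : Fin n → Fin n → Fin n → ℝ} (hT : IsSkew3 T) :
    IsSkew4 (connCorrection (raiseFirst G T) T) :=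
  ⟨connCorrection_raiseFirst_swap12 hG hT, connCorrection_swap23 _ hT, connCorrection_swap34 _ hT⟩

theorem IsSkew4.alt4_eq {Q : Fin n → Fin n → Fin n → Fin n → ℝ} (hQ : IsSkew4 Q)
    (a b d e : Fin n) : alt4 Q a b d e = 4 * Q a b d e := by
  obtain ⟨h12, h23, h34⟩ := hQ
  have h3 : Q d a b e = Q a b d e := by rw [h12, h23, neg_neg]
  have h4 : Q e a b d = -Q a b d e := by rw [h12, h23, neg_neg, h34]
  rw [alt4, h12 a b d e, h3, h4]
  ring

theorem IsRiemannianData.ginv_symm {g ginv : EuclideanSpace ℝ (Fin n) → Fin n → Fin n → ℝ}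
    (hg : IsRiemannianData g ginv) (x : EuclideanSpace ℝ (Fin n)) (a b : Fin n) :
    ginv x a b = ginv x b a := by
  obtain ⟨hsymm, -, hinv, -, -⟩ := hg
  have hA : (Matrix.of (g x)).IsSymm := Matrix.IsSymm.ext_iff.2 fun i j => hsymm x j i
  have hAB : Matrix.of (g x) * Matrix.of (ginv x) = 1 := by
    ext i j
    simpa [Matrix.mul_apply, Matrix.one_apply] using hinv x i j
  have hB := Matrix.inv_eq_right_inv hAB ▸ hA.inv
  exact Matrix.IsSymm.ext_iff.1 hB b a

theorem christoffel_symm {g : EuclideanSpace ℝ (Fin n) → Fin n → Fin n → ℝ}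
    (hg : ∀ x i j, g x i j = g x j i) (ginv : EuclideanSpace ℝ (Fin n) → Fin n → Fin n → ℝ)
    (k i j : Fin n) (x : EuclideanSpace ℝ (Fin n)) :
    christoffel g ginv k i j x = christoffel g ginv k j i x := by
  have hg' : (fun y => g y i j) = fun y => g y j i := funext fun y => hg y i j
  simp only [christoffel, christoffelLow, hg']
  exact Finset.sum_congr rfl fun l _ => by ring

theorem nablaLCH_eq_pd_sub (g ginv : EuclideanSpace ℝ (Fin n) → Fin n → Fin n → ℝ)
    (H : EuclideanSpace ℝ (Fin n) → Fin n → Fin n → Fin n → ℝ) (i j k m : Fin n)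
    (x : EuclideanSpace ℝ (Fin n)) :
    nablaLCH g ginv H i j k m x = pd i (fun y => H y j k m) x
      - connCorrection (fun p a b => christoffel g ginv p a b x) (H x) i j k m := rfl

theorem nablaHatH_eq_nablaLCH_sub (g ginv : EuclideanSpace ℝ (Fin n) → Fin n → Fin n → ℝ)
    (H : EuclideanSpace ℝ (Fin n) → Fin n → Fin n → Fin n → ℝ) (i j k m : Fin n)
    (x : EuclideanSpace ℝ (Fin n)) :
    nablaHatH g ginv H i j k m x = nablaLCH g ginv H i j k m x
      - 1 / 2 * connCorrection (raiseFirst (ginv x) (H x)) (H x) i j k m := by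
  have h := connCorrection_add_smul (fun p a b => christoffel g ginv p a b x)
    (raiseFirst (ginv x) (H x)) (H x) (1 / 2) i j k m
  rw [nablaLCH_eq_pd_sub, sub_sub, ← h]
  rfl

theorem alt4_nablaLCH {g : EuclideanSpace ℝ (Fin n) → Fin n → Fin n → ℝ}
    (hg : ∀ x i j, g x i j = g x j i) (ginv : EuclideanSpace ℝ (Fin n) → Fin n → Fin n → ℝ)
    {H : EuclideanSpace ℝ (Fin n) → Fin n → Fin n → Fin n → ℝ} (x : EuclideanSpace ℝ (Fin n))
    (hH : IsSkew3 (H x)) (i j k m : Fin n) :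
    alt4 (fun a b d e => nablaLCH g ginv H a b d e x) i j k m = extDerH H i j k m x := by
  have h := alt4_connCorrection_eq_zero (fun p a b => christoffel_symm hg ginv p a b x) hH i j k m
  simp only [alt4, nablaLCH_eq_pd_sub] at h ⊢
  rw [extDerH]
  linarith

/-- If the 3-form `H` is closed and covariantly constant with respect to the
metric connection `∇̂` with torsion `H`, then `H` is covariantly constant with respect to the
Levi-Civita connection: `∇H = 0`. -/
theorem lc_parallel_of_hat_parallel
    (g ginv : EuclideanSpace ℝ (Fin n) → Fin n → Fin n → ℝ)
    (H : EuclideanSpace ℝ (Fin n) → Fin n → Fin n → Fin n → ℝ)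
    (hg : IsRiemannianData g ginv) (hH : IsThreeForm H)
    (hclosed : ∀ (x : EuclideanSpace ℝ (Fin n)) (i j k m : Fin n), extDerH H i j k m x = 0)
    (hpar : ∀ (x : EuclideanSpace ℝ (Fin n)) (i j k m : Fin n),
      nablaHatH g ginv H i j k m x = 0) :
    ∀ (x : EuclideanSpace ℝ (Fin n)) (i j k m : Fin n),
      nablaLCH g ginv H i j k m x = 0 := by
  intro x
  have hHx : IsSkew3 (H x) := ⟨hH.1 x, hH.2.1 x⟩
  set Q := connCorrection (raiseFirst (ginv x) (H x)) (H x)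
  have hQ : IsSkew4 Q := isSkew4_connCorrection_raiseFirst (hg.ginv_symm x) hHx
  have hnabla : ∀ a b d e, nablaLCH g ginv H a b d e x = 1 / 2 * Q a b d e := fun a b d e => by
    linarith [nablaHatH_eq_nablaLCH_sub g ginv H a b d e x, hpar x a b d e]
  have hQ_zero : ∀ a b d e, Q a b d e = 0 := fun a b d e => by
    have h := alt4_nablaLCH hg.1 ginv x hHx a b d e
    rw [hclosed, alt4] at h
    simp only [hnabla] at h
    have h4 := hQ.alt4_eq a b d e
    rw [alt4] at h4
    linarith
  intro i j k m
  rw [hnabla, hQ_zero, mul_zero]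
end
end
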